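/- Let G=(V,E) be a locally finite graph with symmetric positive edge weights, μ(x) ≥ μ_min > 0, and h satisfying (H1) and (H2). Let f satisfy (F1) with f(x,s)=0 for s ≤ 0, let ε > 0, and let g ∈ ℋ' with g ≥ 0 and g ≢ 0. Then there exist τ₀ > 0 and v ∈ ℋ with ‖v‖_ℋ = 1 such that J_ε(tv) < 0 for all 0 < t < τ₀; in particular, inf over ‖u‖_ℋ ≤ τ₀ of J_ε(u) is strictly negative. -/

import Mathlib

open Filter Topology

namespace GraphNLE

variable {V : Type*}

/-- Integral of `g` over `V` w.r.t. the measure `μ`: `∫_V g dμ = Σ_x μ(x) g(x)`. -/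
noncomputable def intV (μ g : V → ℝ) : ℝ := ∑' x, μ x * g x

/-- The graph (μ-)Laplacian: `Δu(x) = (1/μ(x)) Σ_{y} w_{xy} (u(y)-u(x))`. -/
noncomputable def lap (w : V → V → ℝ) (μ u : V → ℝ) (x : V) : ℝ :=
  (1 / μ x) * ∑' y, w x y * (u y - u x)

/-- Squared length of the gradient: `|∇u|²(x) = (1/(2μ(x))) Σ_y w_{xy} (u(y)-u(x))²`. -/
noncomputable def gradSq (w : V → V → ℝ) (μ u : V → ℝ) (x : V) : ℝ :=
  (1 / (2 * μ x)) * ∑' y, w x y * (u y - u x) ^ 2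

/-- The gradient form `Γ(u,v)(x) = (1/(2μ(x))) Σ_y w_{xy} (u(y)-u(x))(v(y)-v(x))`. -/
noncomputable def gamma (w : V → V → ℝ) (μ u v : V → ℝ) (x : V) : ℝ :=
  (1 / (2 * μ x)) * ∑' y, w x y * (u y - u x) * (v y - v x)

/-- Membership in `W^{1,2}(V)`: finite `∫(|∇u|² + u²) dμ`. -/
def memW (w : V → V → ℝ) (μ u : V → ℝ) : Prop :=
  Summable (fun x => μ x * gradSq w μ u x) ∧ Summable (fun x => μ x * u x ^ 2)

/-- The `W^{1,2}` norm `(∫_V (|∇u|² + u²) dμ)^{1/2}`. -/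
noncomputable def normW (w : V → V → ℝ) (μ u : V → ℝ) : ℝ :=
  Real.sqrt (intV μ fun x => gradSq w μ u x + u x ^ 2)

/-- Membership in the space `ℋ`: finite `∫(|∇u|² + h u²) dμ`. -/
def memH (w : V → V → ℝ) (μ h u : V → ℝ) : Prop :=
  Summable (fun x => μ x * gradSq w μ u x) ∧ Summable (fun x => μ x * (h x * u x ^ 2))

/-- The norm of `ℋ`: `‖u‖_ℋ = (∫_V (|∇u|² + h u²) dμ)^{1/2}`. -/
noncomputable def normH (w : V → V → ℝ) (μ h u : V → ℝ) : ℝ :=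
  Real.sqrt (intV μ fun x => gradSq w μ u x + h x * u x ^ 2)

/-- The inner product of `ℋ`: `⟨u,v⟩_ℋ = ∫_V (Γ(u,v) + h u v) dμ`. -/
noncomputable def innerH (w : V → V → ℝ) (μ h u v : V → ℝ) : ℝ :=
  intV μ fun x => gamma w μ u v x + h x * u x * v x

/-- `λ₁ = inf { ∫(|∇u|² + h u²) dμ : u ∈ ℋ, ∫ u² dμ = 1 }`. -/
noncomputable def lambda1 (w : V → V → ℝ) (μ h : V → ℝ) : ℝ :=
  sInf {t : ℝ | ∃ u : V → ℝ, memH w μ h u ∧ intV μ (fun x => u x ^ 2) = 1 ∧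
    intV μ (fun x => gradSq w μ u x + h x * u x ^ 2) = t}

/-- The primitive `F(x,s) = ∫_0^s f(x,t) dt`. -/
noncomputable def Fint (f : V → ℝ → ℝ) (x : V) (s : ℝ) : ℝ := ∫ t in (0:ℝ)..s, f x t

/-- The functional `J(u) = (1/2)∫(|∇u|² + h u²) dμ − ∫ F(x,u) dμ`. -/
noncomputable def energy (w : V → V → ℝ) (μ h : V → ℝ) (f : V → ℝ → ℝ) (u : V → ℝ) : ℝ :=
  (1 / 2) * intV μ (fun x => gradSq w μ u x + h x * u x ^ 2) -
    intV μ (fun x => Fint f x (u x))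

/-- The perturbed functional `J_ε(u) = J(u) − ε ∫ g u dμ`. -/
noncomputable def energyP (w : V → V → ℝ) (μ h : V → ℝ) (f : V → ℝ → ℝ) (g : V → ℝ)
    (ε : ℝ) (u : V → ℝ) : ℝ :=
  energy w μ h f u - ε * intV μ (fun x => g x * u x)

/-- Weak convergence `u_k ⇀ u` in the Hilbert space `ℋ`. -/
def weakConvH (w : V → V → ℝ) (μ h : V → ℝ) (uk : ℕ → V → ℝ) (u : V → ℝ) : Prop :=
  ∀ v : V → ℝ, memH w μ h v →
    Tendsto (fun k => innerH w μ h (uk k) v) atTop (nhds (innerH w μ h u v))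

/-- The `L^q(V,μ)` norm for finite `q`. -/
noncomputable def LqNorm (μ : V → ℝ) (q : ℝ) (u : V → ℝ) : ℝ :=
  (intV μ fun x => |u x| ^ q) ^ (1 / q)

/-- The `L^∞(V)` norm `sup_x |u(x)|`. -/
noncomputable def LinfNorm (u : V → ℝ) : ℝ := ⨆ x, |u x|

/-- `g` (viewed via the pairing `u ↦ ∫ g u dμ`) belongs to the dual `ℋ'` of `ℋ`. -/
def memHdual (w : V → V → ℝ) (μ h g : V → ℝ) : Prop :=
  ∃ C : ℝ, ∀ u : V → ℝ, memH w μ h u →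
    Summable (fun x => μ x * (g x * u x)) ∧
    |intV μ fun x => g x * u x| ≤ C * normH w μ h u

/-- `u ∈ ℋ` is a weak solution of `−Δu + hu = f(x,u)`. -/
def weakSol (w : V → V → ℝ) (μ h : V → ℝ) (f : V → ℝ → ℝ) (u : V → ℝ) : Prop :=
  memH w μ h u ∧ ∀ φ : V → ℝ, memH w μ h φ →
    intV μ (fun x => gamma w μ u φ x + h x * u x * φ x) =
      intV μ (fun x => f x (u x) * φ x)

/-- `u ∈ ℋ` is a weak solution of the perturbed equation `−Δu + hu = f(x,u) + εg`. -/
def weakSolP (w : V → V → ℝ) (μ h : V → ℝ) (f : V → ℝ → ℝ) (g : V → ℝ) (ε : ℝ)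
    (u : V → ℝ) : Prop :=
  memH w μ h u ∧ ∀ φ : V → ℝ, memH w μ h φ →
    intV μ (fun x => gamma w μ u φ x + h x * u x * φ x) =
      intV μ (fun x => f x (u x) * φ x) + ε * intV μ (fun x => g x * φ x)

/-- The simple graph underlying the weights `w` (edges where the weight is nonzero). -/
def adjGraph (w : V → V → ℝ) : SimpleGraph V where
  Adj x y := x ≠ y ∧ (w x y ≠ 0 ∨ w y x ≠ 0)
  symm := ⟨fun x y hxy => ⟨hxy.1.symm, hxy.2.symm⟩⟩
  loopless := ⟨fun x hx => hx.1 rfl⟩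

/-!
Pick `x₀` with `g x₀ > 0` and move along the point mass `δ = 1_{x₀}`: in
`J_ε(sδ) = s² ‖δ‖²_ℋ / 2 − μ(x₀) F(x₀,s) − ε μ(x₀) g(x₀) s` the last term is linear and negative,
while `F(x₀,s) = o(s)` as `s → 0⁺` because `f(x₀,0) = 0`; hence `J_ε(sδ) < 0` for small `s > 0`.

For the infimum, `J_ε` must be bounded below on the ball `‖u‖_ℋ ≤ τ` (otherwise the real `sInf`
is the junk value `0`). There `μ_min h₀ u(x)² ≤ ‖u‖²_ℋ` bounds `u` uniformly, so `F(x,u) ≤ A |u|`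
by (F1) and `f = 0` on `s ≤ 0`, and `∫ |u| dμ ≤ (∫ 1/h dμ + ∫ h u² dμ) / 2` is finite by (H2).
-/

section Hilbert

variable {w : V → V → ℝ} {μ h : V → ℝ}

lemma gradSq_smul (c : ℝ) (u : V → ℝ) (x : V) :
    gradSq w μ (fun y => c * u y) x = c ^ 2 * gradSq w μ u x := by
  unfold gradSq
  have hterm : (fun y => w x y * (c * u y - c * u x) ^ 2)
      = fun y => c ^ 2 * (w x y * (u y - u x) ^ 2) := by
    funext y; ring
  rw [hterm, tsum_mul_left]; ring

lemma gradSq_nonneg (hw : ∀ x y, 0 ≤ w x y) (hμ : ∀ x, 0 ≤ μ x) (u : V → ℝ) (x : V) :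
    0 ≤ gradSq w μ u x :=
  mul_nonneg (by have := hμ x; positivity)
    (tsum_nonneg fun y => mul_nonneg (hw x y) (sq_nonneg _))

lemma mul_gradSq_add_nonneg (hw : ∀ x y, 0 ≤ w x y) (hμ : ∀ x, 0 ≤ μ x)
    (hh : ∀ x, 0 ≤ h x) (u : V → ℝ) (x : V) :
    0 ≤ μ x * (gradSq w μ u x + h x * u x ^ 2) :=
  mul_nonneg (hμ x) (add_nonneg (gradSq_nonneg hw hμ u x) (mul_nonneg (hh x) (sq_nonneg _)))

lemma sq_normH (hw : ∀ x y, 0 ≤ w x y) (hμ : ∀ x, 0 ≤ μ x) (hh : ∀ x, 0 ≤ h x)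
    (u : V → ℝ) :
    normH w μ h u ^ 2 = intV μ (fun x => gradSq w μ u x + h x * u x ^ 2) :=
  Real.sq_sqrt (tsum_nonneg (mul_gradSq_add_nonneg hw hμ hh u))

lemma tsum_mul_sq_le_sq_normH (hw : ∀ x y, 0 ≤ w x y) (hμ : ∀ x, 0 ≤ μ x)
    (hh : ∀ x, 0 ≤ h x) {u : V → ℝ} (hu : memH w μ h u) :
    ∑' x, μ x * (h x * u x ^ 2) ≤ normH w μ h u ^ 2 := by
  rw [sq_normH hw hμ hh]
  refine Summable.tsum_le_tsum (fun x => ?_) hu.2 (by simpa only [mul_add] using hu.1.add hu.2)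
  nlinarith [mul_nonneg (hμ x) (gradSq_nonneg hw hμ u x)]

lemma mul_sq_le_sq_normH (hw : ∀ x y, 0 ≤ w x y) (hμ : ∀ x, 0 ≤ μ x)
    (hh : ∀ x, 0 ≤ h x) {u : V → ℝ} (hu : memH w μ h u) (x : V) :
    μ x * (h x * u x ^ 2) ≤ normH w μ h u ^ 2 :=
  (hu.2.le_tsum x fun y _ => mul_nonneg (hμ y) (mul_nonneg (hh y) (sq_nonneg _))).trans
    (tsum_mul_sq_le_sq_normH hw hμ hh hu)

lemma memH_smul (c : ℝ) {u : V → ℝ} (hu : memH w μ h u) :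
    memH w μ h (fun y => c * u y) := by
  constructor
  · simpa only [gradSq_smul, mul_left_comm (μ _)] using hu.1.mul_left (c ^ 2)
  · have hterm : (fun x => μ x * (h x * (c * u x) ^ 2))
        = fun x => c ^ 2 * (μ x * (h x * u x ^ 2)) := by funext x; ring
    rw [hterm]; exact hu.2.mul_left _

lemma intV_gradSq_add_smul (c : ℝ) (u : V → ℝ) :
    intV μ (fun x => gradSq w μ (fun y => c * u y) x + h x * (c * u x) ^ 2)
      = c ^ 2 * intV μ (fun x => gradSq w μ u x + h x * u x ^ 2) := by
  unfold intV
  rw [← tsum_mul_left]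
  congr 1; funext x; simp only [gradSq_smul]; ring

lemma normH_smul (c : ℝ) (u : V → ℝ) :
    normH w μ h (fun y => c * u y) = |c| * normH w μ h u := by
  rw [normH, intV_gradSq_add_smul, Real.sqrt_mul (sq_nonneg c), Real.sqrt_sq_eq_abs, normH]

end Hilbert

lemma eventually_neg_mul_le_intervalIntegral {φ : ℝ → ℝ} (hφ : Continuous φ) (hφ0 : φ 0 = 0)
    {c : ℝ} (hc : 0 < c) : ∀ᶠ s in 𝓝[>] 0, -(c * s) ≤ ∫ t in (0 : ℝ)..s, φ t := by
  have hnear : ∀ᶠ t in 𝓝 0, -c < φ t :=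
    (hφ.tendsto 0).eventually_const_lt (by rw [hφ0]; linarith)
  obtain ⟨η, hη, hball⟩ := Metric.eventually_nhds_iff.mp hnear
  filter_upwards [Ioo_mem_nhdsGT hη] with s hs
  have hbound : ∀ t ∈ Set.Icc 0 s, -c ≤ φ t := fun t ht =>
    (hball (by rw [Real.dist_eq, sub_zero, abs_of_nonneg ht.1]; linarith [ht.2, hs.2])).le
  have := intervalIntegral.integral_mono_on hs.1.le
    (intervalIntegrable_const (μ := MeasureTheory.volume)) (hφ.intervalIntegrable 0 s) hbound
  simpa [mul_comm] using this

lemma intervalIntegral_le_mul_abs {φ : ℝ → ℝ} (hφ : Continuous φ)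
    (hneg : ∀ s ≤ 0, φ s = 0) {A M s : ℝ} (hA : ∀ t ∈ Set.Icc 0 M, φ t ≤ A) (hs : |s| ≤ M) :
    ∫ t in (0 : ℝ)..s, φ t ≤ A * |s| := by
  rcases le_or_gt s 0 with hs0 | hs0
  · have hA0 : 0 ≤ A := hneg 0 le_rfl ▸ hA 0 ⟨le_rfl, (abs_nonneg s).trans hs⟩
    have hzero : ∫ t in (0 : ℝ)..s, φ t = 0 := by
      rw [intervalIntegral.integral_congr (g := fun _ => 0) fun t ht =>
        hneg t (by rw [Set.uIcc_of_ge hs0] at ht; exact ht.2)]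
      simp
    rw [hzero]; positivity
  · have := intervalIntegral.integral_mono_on hs0.le (hφ.intervalIntegrable 0 s)
      (intervalIntegrable_const (μ := MeasureTheory.volume))
      fun t ht => hA t ⟨ht.1, ht.2.trans ((le_abs_self s).trans hs)⟩
    simpa [abs_of_pos hs0, mul_comm] using this

-- `hψ0` covers the junk value `intV μ φ = 0` when `μ φ` is not summable.
lemma intV_le_intV {μ φ ψ : V → ℝ} (hμ : ∀ x, 0 ≤ μ x) (hle : ∀ x, φ x ≤ ψ x)
    (hψ : Summable fun x => μ x * ψ x) (hψ0 : 0 ≤ intV μ ψ) : intV μ φ ≤ intV μ ψ := by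
  by_cases hφ : Summable fun x => μ x * φ x
  · exact Summable.tsum_le_tsum (fun x => mul_le_mul_of_nonneg_left (hle x) (hμ x)) hφ hψ
  · rwa [intV, tsum_eq_zero_of_not_summable hφ]

lemma abs_le_inv_add_mul_sq {a b : ℝ} (ha : 0 < a) : |b| ≤ (1 / a + a * b ^ 2) / 2 := by
  have key : (1 / a + a * b ^ 2) / 2 - |b| = (a * |b| - 1) ^ 2 / (2 * a) := by
    field_simp; rw [← sq_abs b]; ring
  have : 0 ≤ (a * |b| - 1) ^ 2 / (2 * a) := by positivity
  linarith

lemma mul_abs_le_inv_add_mul_sq {m a : ℝ} (b : ℝ) (hm : 0 ≤ m) (ha : 0 < a) :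
    m * |b| ≤ (m * (1 / a) + m * (a * b ^ 2)) / 2 := by
  have := mul_le_mul_of_nonneg_left (abs_le_inv_add_mul_sq (b := b) ha) hm
  linarith

section WeightedL1

variable {μ h u : V → ℝ} (hμ : ∀ x, 0 ≤ μ x) (hh : ∀ x, 0 < h x)
  (hH2 : Summable fun x => μ x * (1 / h x)) (hu : Summable fun x => μ x * (h x * u x ^ 2))
include hμ hh hH2 hu

lemma summable_mul_abs : Summable fun x => μ x * |u x| :=
  .of_nonneg_of_le (fun x => mul_nonneg (hμ x) (abs_nonneg _))
    (fun x => mul_abs_le_inv_add_mul_sq (u x) (hμ x) (hh x)) ((hH2.add hu).div_const 2)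

lemma tsum_mul_abs_le :
    ∑' x, μ x * |u x| ≤ (∑' x, μ x * (1 / h x) + ∑' x, μ x * (h x * u x ^ 2)) / 2 := by
  rw [← hH2.tsum_add hu, ← tsum_div_const]
  exact Summable.tsum_le_tsum (fun x => mul_abs_le_inv_add_mul_sq (u x) (hμ x) (hh x))
    (summable_mul_abs hμ hh hH2 hu) ((hH2.add hu).div_const 2)

end WeightedL1

section PointMass

variable [DecidableEq V] {w : V → V → ℝ} {μ h : V → ℝ}

def pointMass (x₀ x : V) : ℝ := if x = x₀ then 1 else 0

lemma memH_pointMass (hsymm : ∀ x y, w x y = w y x) (hlf : ∀ x, {y | w x y ≠ 0}.Finite)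
    (x₀ : V) : memH w μ h (pointMass x₀) := by
  constructor
  · refine summable_of_ne_finset_zero (s := insert x₀ (hlf x₀).toFinset) fun x hx => ?_
    simp only [Finset.mem_insert, Set.Finite.mem_toFinset, Set.mem_ofPred_eq, not_or,
      not_not] at hx
    have hterm : ∀ y, w x y * (pointMass x₀ y - pointMass x₀ x) ^ 2 = 0 := by
      intro y
      rcases eq_or_ne y x₀ with rfl | hy
      · rw [hsymm, hx.2, zero_mul]
      · simp [pointMass, hy, hx.1]
    rw [gradSq, tsum_congr hterm, tsum_zero, mul_zero, mul_zero]
  · refine summable_of_ne_finset_zero (s := {x₀}) fun x hx => ?_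
    simp [pointMass, Finset.mem_singleton.not.mp hx]

lemma normH_pointMass_pos (hw : ∀ x y, 0 ≤ w x y) (hμ : ∀ x, 0 < μ x) (hh : ∀ x, 0 < h x)
    {x₀ : V} (hδ : memH w μ h (pointMass x₀)) : 0 < normH w μ h (pointMass x₀) := by
  have hμ' : ∀ x, 0 ≤ μ x := fun x => (hμ x).le
  have hh' : ∀ x, 0 ≤ h x := fun x => (hh x).le
  have hpos : 0 < μ x₀ * (h x₀ * pointMass x₀ x₀ ^ 2) := by
    simpa [pointMass] using mul_pos (hμ x₀) (hh x₀)
  have := hpos.trans_le (mul_sq_le_sq_normH hw hμ' hh' hδ x₀)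
  exact lt_of_pow_lt_pow_left₀ 2 (Real.sqrt_nonneg _) (by simpa using this)

lemma intV_mul_pointMass (φ : V → ℝ → ℝ) (hφ : ∀ x, φ x 0 = 0) (x₀ : V) (s : ℝ) :
    intV μ (fun x => φ x (s * pointMass x₀ x)) = μ x₀ * φ x₀ s := by
  rw [intV, tsum_eq_single x₀ fun x hx => by simp [pointMass, hx, hφ]]
  simp [pointMass]

lemma energyP_mul_pointMass {f : V → ℝ → ℝ} {g : V → ℝ} {ε : ℝ} (x₀ : V) (s : ℝ) :
    energyP w μ h f g ε (fun x => s * pointMass x₀ x)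
      = s ^ 2 * intV μ (fun x => gradSq w μ (pointMass x₀) x
          + h x * pointMass x₀ x ^ 2) / 2
        - μ x₀ * Fint f x₀ s - ε * (μ x₀ * (g x₀ * s)) := by
  rw [energyP, energy, intV_gradSq_add_smul,
    intV_mul_pointMass (Fint f) (fun x => intervalIntegral.integral_same) x₀ s,
    intV_mul_pointMass (fun x r => g x * r) (fun x => mul_zero _) x₀ s]
  ring

lemma eventually_energyP_mul_pointMass_neg {f : V → ℝ → ℝ} {g : V → ℝ} {ε : ℝ} {x₀ : V}
    (hf : Continuous (f x₀)) (hf0 : f x₀ 0 = 0) (hμ : 0 < μ x₀) (hg : 0 < g x₀) (hε : 0 < ε) :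
    ∀ᶠ s in 𝓝[>] 0, energyP w μ h f g ε (fun x => s * pointMass x₀ x) < 0 := by
  set Q := intV μ (fun x => gradSq w μ (pointMass x₀) x + h x * pointMass x₀ x ^ 2)
  set κ := ε * (μ x₀ * g x₀)
  have hκ : 0 < κ := by positivity
  have hQ : ∀ᶠ s in 𝓝[>] (0 : ℝ), s * Q < κ := nhdsWithin_le_nhds <|
    ((continuous_mul_const Q).tendsto' 0 0 (zero_mul Q)).eventually_lt_const hκ
  filter_upwards [hQ, self_mem_nhdsWithin,
    eventually_neg_mul_le_intervalIntegral hf hf0 (c := κ / (2 * μ x₀)) (by positivity)]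
    with s hsQ hs hF
  have hF' : -(κ / 2 * s) ≤ μ x₀ * Fint f x₀ s :=
    calc -(κ / 2 * s) = μ x₀ * -(κ / (2 * μ x₀) * s) := by field_simp
      _ ≤ μ x₀ * Fint f x₀ s := mul_le_mul_of_nonneg_left hF hμ.le
  have hlin : ε * (μ x₀ * (g x₀ * s)) = κ * s := by ring
  have : s * (s * Q - κ) < 0 := mul_neg_of_pos_of_neg hs (by linarith)
  rw [energyP_mul_pointMass, hlin]
  nlinarith

end PointMass

lemma sq_apply_le_sq_normH_div {w : V → V → ℝ} {μ h u : V → ℝ} {μmin h₀ : ℝ}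
    (hw : ∀ x y, 0 ≤ w x y) (hμmin : 0 < μmin) (hμ : ∀ x, μmin ≤ μ x) (hh₀ : 0 < h₀)
    (hH1 : ∀ x, h₀ ≤ h x) (hu : memH w μ h u) (x : V) :
    u x ^ 2 ≤ normH w μ h u ^ 2 / (μmin * h₀) := by
  have hμ0 : ∀ x, 0 ≤ μ x := fun x => hμmin.le.trans (hμ x)
  rw [le_div_iff₀ (by positivity)]
  have hmh : μmin * h₀ ≤ μ x * h x := mul_le_mul (hμ x) (hH1 x) hh₀.le (hμ0 x)
  nlinarith [mul_le_mul_of_nonneg_left hmh (sq_nonneg (u x)),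
    mul_sq_le_sq_normH hw hμ0 (fun x => hh₀.le.trans (hH1 x)) hu x]

lemma bddBelow_energyP_image_normH_le {w : V → V → ℝ} {μ h : V → ℝ} {f : V → ℝ → ℝ}
    {g : V → ℝ} {ε μmin h₀ τ : ℝ} (hw : ∀ x y, 0 ≤ w x y)
    (hμmin : 0 < μmin) (hμ : ∀ x, μmin ≤ μ x) (hh₀ : 0 < h₀) (hH1 : ∀ x, h₀ ≤ h x)
    (hH2 : Summable fun x => μ x * (1 / h x)) (hfc : ∀ x, Continuous (f x))
    (hfb : ∀ M : ℝ, 0 < M → ∃ A : ℝ, ∀ x, ∀ s ∈ Set.Icc (0:ℝ) M, f x s ≤ A)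
    (hfneg : ∀ x, ∀ s : ℝ, s ≤ 0 → f x s = 0) (hg : memHdual w μ h g) (hε : 0 ≤ ε)
    (hτ : 0 < τ) :
    BddBelow (energyP w μ h f g ε '' {u | memH w μ h u ∧ normH w μ h u ≤ τ}) := by
  have hμ0 : ∀ x, 0 ≤ μ x := fun x => hμmin.le.trans (hμ x)
  have hhpos : ∀ x, 0 < h x := fun x => hh₀.trans_le (hH1 x)
  have hh0 : ∀ x, 0 ≤ h x := fun x => (hhpos x).le
  set M := Real.sqrt (τ ^ 2 / (μmin * h₀))
  obtain ⟨A, hA⟩ := hfb M (Real.sqrt_pos.mpr (by positivity))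
  obtain ⟨C, hC⟩ := hg
  set B := (∑' x, μ x * (1 / h x) + τ ^ 2) / 2
  refine ⟨-(|A| * B) - ε * (|C| * τ), ?_⟩
  rintro _ ⟨u, ⟨hu, hnorm⟩, rfl⟩
  have hnorm_sq : normH w μ h u ^ 2 ≤ τ ^ 2 := pow_le_pow_left₀ (Real.sqrt_nonneg _) hnorm 2
  have hbound : ∀ x, |u x| ≤ M := fun x => Real.abs_le_sqrt <|
    (sq_apply_le_sq_normH_div hw hμmin hμ hh₀ hH1 hu x).trans (by gcongr)
  have hL1 : ∑' x, μ x * |u x| ≤ B := by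
    linarith [tsum_mul_abs_le hμ0 hhpos hH2 hu.2, tsum_mul_sq_le_sq_normH hw hμ0 hh0 hu,
      show B = (∑' x, μ x * (1 / h x) + τ ^ 2) / 2 from rfl]
  have hAu : intV μ (fun x => |A| * |u x|) = |A| * ∑' x, μ x * |u x| := by
    rw [intV, ← tsum_mul_left]; simp_rw [mul_left_comm]
  have hF : intV μ (fun x => Fint f x (u x)) ≤ |A| * B := by
    refine (intV_le_intV hμ0 (fun x => intervalIntegral_le_mul_abs (hfc x) (hfneg x)
      (fun s hs => (hA x s hs).trans (le_abs_self A)) (hbound x)) ?_ ?_).trans ?_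
    · simpa only [mul_left_comm (μ _)] using (summable_mul_abs hμ0 hhpos hH2 hu.2).mul_left |A|
    · rw [hAu]
      exact mul_nonneg (abs_nonneg A) (tsum_nonneg fun x => mul_nonneg (hμ0 x) (abs_nonneg _))
    · rw [hAu]; exact mul_le_mul_of_nonneg_left hL1 (abs_nonneg A)
  have hgu : intV μ (fun x => g x * u x) ≤ |C| * τ :=
    (le_abs_self _).trans <| (hC u hu).2.trans <|
      (mul_le_mul_of_nonneg_right (le_abs_self C) (Real.sqrt_nonneg _)).trans
        (mul_le_mul_of_nonneg_left hnorm (abs_nonneg C))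
  rw [energyP, energy, ← sq_normH hw hμ0 hh0]
  nlinarith [mul_le_mul_of_nonneg_left hgu hε, sq_nonneg (normH w μ h u)]

theorem perturbed_energy_negative_near_zero
    (w : V → V → ℝ) (hsymm : ∀ x y, w x y = w y x) (hwnn : ∀ x y, 0 ≤ w x y)
    (hlf : ∀ x : V, {y | w x y ≠ 0}.Finite)
    (μ : V → ℝ) (μmin : ℝ) (hμmin : 0 < μmin) (hμ : ∀ x, μmin ≤ μ x)
    (h : V → ℝ) (h₀ : ℝ) (hh₀ : 0 < h₀) (hH1 : ∀ x, h₀ ≤ h x)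
    (hH2 : Summable fun x => μ x * (1 / h x))
    (f : V → ℝ → ℝ)
    (hF1c : ∀ x, Continuous (f x)) (hF10 : ∀ x, f x 0 = 0)
    (hF1b : ∀ M : ℝ, 0 < M → ∃ A : ℝ, ∀ x, ∀ s ∈ Set.Icc (0:ℝ) M, f x s ≤ A)
    (hfneg : ∀ x, ∀ s : ℝ, s ≤ 0 → f x s = 0)
    (g : V → ℝ) (hgdual : memHdual w μ h g)
    (hgnn : ∀ x, 0 ≤ g x) (hgne : g ≠ 0)
    (ε : ℝ) (hε : 0 < ε) :
    ∃ τ₀ : ℝ, 0 < τ₀ ∧ ∃ v : V → ℝ, memH w μ h v ∧ normH w μ h v = 1 ∧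
      (∀ t : ℝ, 0 < t → t < τ₀ → energyP w μ h f g ε (fun x => t * v x) < 0) ∧
      sInf ((fun u => energyP w μ h f g ε u) ''
        {u : V → ℝ | memH w μ h u ∧ normH w μ h u ≤ τ₀}) < 0 := by
  classical
  have hμpos : ∀ x, 0 < μ x := fun x => hμmin.trans_le (hμ x)
  obtain ⟨x₀, hx₀⟩ : ∃ x, g x ≠ 0 := Function.ne_iff.mp hgne
  have hδ : memH w μ h (pointMass x₀) := memH_pointMass hsymm hlf x₀
  set N := normH w μ h (pointMass x₀)
  have hN : 0 < N := normH_pointMass_pos hwnn hμpos (fun x => hh₀.trans_le (hH1 x)) hδ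
  obtain ⟨σ, hσ : 0 < σ, hneg⟩ := mem_nhdsGT_iff_exists_Ioo_subset.mp <|
    eventually_energyP_mul_pointMass_neg (h := h) (hF1c x₀) (hF10 x₀) (hμpos x₀)
      ((hgnn x₀).lt_of_ne' hx₀) hε
  set v : V → ℝ := fun x => N⁻¹ * pointMass x₀ x
  have hv : normH w μ h v = 1 := by
    rw [normH_smul, abs_of_pos (inv_pos.mpr hN), inv_mul_cancel₀ hN.ne']
  have hray : ∀ t, 0 < t → t < N * σ → energyP w μ h f g ε (fun x => t * v x) < 0 := by
    intro t ht htσ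
    simp_rw [v, ← mul_assoc]
    exact hneg ⟨by positivity, by rwa [← div_eq_mul_inv, div_lt_iff₀' hN]⟩
  refine ⟨N * σ, mul_pos hN hσ, v, memH_smul _ hδ, hv, hray, ?_⟩
  have hhalf : normH w μ h (fun x => N * σ / 2 * v x) ≤ N * σ := by
    rw [normH_smul, hv, mul_one, abs_of_pos (by positivity)]; linarith [mul_pos hN hσ]
  exact csInf_lt_of_lt (bddBelow_energyP_image_normH_le hwnn hμmin hμ hh₀ hH1 hH2 hF1c hF1b
    hfneg hgdual hε.le (mul_pos hN hσ)) ⟨_, ⟨memH_smul _ (memH_smul _ hδ), hhalf⟩, rfl⟩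
    (hray _ (by positivity) (by linarith [mul_pos hN hσ]))

end GraphNLE
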